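/- Let f : ℝ^d → ℝ be continuously differentiable with global minimum value f(x*), let γ, α, ρ > 0, and let (x, p, ξ) be a solution of the iKFAD dynamics on [0, ∞) with ξ(t) ≥ 0 componentwise for all t ≥ 0. Then the function 𝒢(t) = f(x(t)) − f(x*) + (1/2)‖p(t)‖² + (ρ/2)‖ξ(t)‖² satisfies 𝒢'(t) = −γ‖p(t)‖² − αρ‖ξ(t)‖² ≤ 0 for all t ≥ 0; in particular 𝒢 is nonincreasing. -/

import Mathlib

/-- Componentwise (Hadamard) product of two vectors in `ℝ^d`. -/
noncomputable def cwMul {d : ℕ} (a b : EuclideanSpace ℝ (Fin d)) :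
    EuclideanSpace ℝ (Fin d) := WithLp.toLp 2 (fun i => a i * b i)

/-- Componentwise square of a vector in `ℝ^d`. -/
noncomputable def cwSq {d : ℕ} (a : EuclideanSpace ℝ (Fin d)) :
    EuclideanSpace ℝ (Fin d) := WithLp.toLp 2 (fun i => a i ^ 2)

/-!
Along a solution, the work `-⟪p, ξ ⋆ p⟫ = -⟪ξ, [p]²⟫` done by the adaptive friction is
exactly compensated by the growth `ρ ⟪ξ, [p]²/ρ⟫` of the thermostat energy `(ρ/2)‖ξ‖²`, while
`⟪∇f(x), p⟫` cancels against the conservative force. Only the dissipation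
`-γ‖p‖² - αρ‖ξ‖²` survives, and a nonpositive derivative makes the energy antitone.
-/

open RealInnerProductSpace

theorem inner_cwMul_self_eq_inner_cwSq {d : ℕ} (a b : EuclideanSpace ℝ (Fin d)) :
    ⟪b, cwMul a b⟫ = ⟪a, cwSq b⟫ := by
  simp only [PiLp.inner_apply, cwMul, cwSq, RCLike.inner_apply, conj_trivial]
  exact Finset.sum_congr rfl fun i _ => by ring

theorem HasGradientAt.comp_hasDerivAt {F : Type*} [NormedAddCommGroup F]
    [InnerProductSpace ℝ F] [CompleteSpace F] {f : F → ℝ} {g x' : F} {x : ℝ → F} {t : ℝ}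
    (hf : HasGradientAt f g (x t)) (hx : HasDerivAt x x' t) :
    HasDerivAt (fun s => f (x s)) ⟪g, x'⟫ t := by
  have h := hf.hasFDerivAt.comp_hasDerivAt t hx
  simp only [InnerProductSpace.toDual_apply_apply] at h
  exact h

theorem antitoneOn_Ici_of_hasDerivAt_nonpos {F F' : ℝ → ℝ} {a : ℝ}
    (hF : ∀ t ∈ Set.Ici a, HasDerivAt F (F' t) t) (hF' : ∀ t ∈ Set.Ici a, F' t ≤ 0) :
    AntitoneOn F (Set.Ici a) := by
  refine antitoneOn_of_hasDerivWithinAt_nonpos (f' := F') (convex_Ici a)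
    (fun t ht => (hF t ht).continuousAt.continuousWithinAt) (fun t ht => ?_)
    (fun t ht => ?_)
  all_goals rw [interior_Ici] at ht
  · exact (hF t (Set.mem_Ici.2 ht.le)).hasDerivWithinAt
  · exact hF' t (Set.mem_Ici.2 ht.le)

theorem ikfad_energy_rate_eq {d : ℕ} (g p ξ : EuclideanSpace ℝ (Fin d)) {γ α ρ : ℝ}
    (hρ : ρ ≠ 0) :
    ⟪g, p⟫ + 1 / 2 * (2 * ⟪p, -g - γ • p - cwMul ξ p⟫)
      + ρ / 2 * (2 * ⟪ξ, ρ⁻¹ • cwSq p - α • ξ⟫) = -γ * ‖p‖ ^ 2 - α * ρ * ‖ξ‖ ^ 2 := by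
  simp only [inner_sub_right, inner_neg_right, real_inner_smul_right,
    inner_cwMul_self_eq_inner_cwSq, real_inner_self_eq_norm_sq, real_inner_comm g p]
  field_simp
  ring

theorem hasDerivAt_ikfad_energy {d : ℕ} {f : EuclideanSpace ℝ (Fin d) → ℝ}
    (hf : Differentiable ℝ f) (c : ℝ) {γ α ρ : ℝ} (hρ : ρ ≠ 0)
    {x p ξ : ℝ → EuclideanSpace ℝ (Fin d)} {t : ℝ}
    (hx : HasDerivAt x (p t) t)
    (hp : HasDerivAt p (-gradient f (x t) - γ • p t - cwMul (ξ t) (p t)) t)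
    (hξ : HasDerivAt ξ (ρ⁻¹ • cwSq (p t) - α • ξ t) t) :
    HasDerivAt (fun s => f (x s) - c + (1 / 2) * ‖p s‖ ^ 2 + (ρ / 2) * ‖ξ s‖ ^ 2)
      (-γ * ‖p t‖ ^ 2 - α * ρ * ‖ξ t‖ ^ 2) t := by
  have hfx := ((hf (x t)).hasGradientAt.comp_hasDerivAt hx).sub_const c
  rw [← ikfad_energy_rate_eq _ _ _ hρ]
  exact (hfx.add (hp.norm_sq.const_mul _)).add (hξ.norm_sq.const_mul _)

theorem ikfad_lyapunov_decreasing_general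
    (d : ℕ) (f : EuclideanSpace ℝ (Fin d) → ℝ)
    (hf : ContDiff ℝ 1 f)
    (xstar : EuclideanSpace ℝ (Fin d))
    (γ α ρ : ℝ) (hγ : 0 < γ) (hα : 0 < α) (hρ : 0 < ρ)
    (x p ξ : ℝ → EuclideanSpace ℝ (Fin d))
    (hx : ∀ t, 0 ≤ t → HasDerivAt x (p t) t)
    (hp : ∀ t, 0 ≤ t → HasDerivAt p
      (-gradient f (x t) - γ • p t - cwMul (ξ t) (p t)) t)
    (hξ : ∀ t, 0 ≤ t → HasDerivAt ξ (ρ⁻¹ • cwSq (p t) - α • ξ t) t) :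
    (∀ t : ℝ, 0 ≤ t →
      HasDerivAt
        (fun s => f (x s) - f xstar + (1 / 2) * ‖p s‖ ^ 2 + (ρ / 2) * ‖ξ s‖ ^ 2)
        (-γ * ‖p t‖ ^ 2 - α * ρ * ‖ξ t‖ ^ 2) t ∧
      -γ * ‖p t‖ ^ 2 - α * ρ * ‖ξ t‖ ^ 2 ≤ 0) ∧
    AntitoneOn
      (fun s => f (x s) - f xstar + (1 / 2) * ‖p s‖ ^ 2 + (ρ / 2) * ‖ξ s‖ ^ 2)
      (Set.Ici (0 : ℝ)) := by
  have hderiv : ∀ t ∈ Set.Ici (0 : ℝ), HasDerivAt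
      (fun s => f (x s) - f xstar + (1 / 2) * ‖p s‖ ^ 2 + (ρ / 2) * ‖ξ s‖ ^ 2)
      (-γ * ‖p t‖ ^ 2 - α * ρ * ‖ξ t‖ ^ 2) t := fun t ht =>
    hasDerivAt_ikfad_energy (hf.differentiable one_ne_zero) _ hρ.ne' (hx t ht) (hp t ht)
      (hξ t ht)
  have hrate : ∀ t ∈ Set.Ici (0 : ℝ), -γ * ‖p t‖ ^ 2 - α * ρ * ‖ξ t‖ ^ 2 ≤ 0 := fun t _ => by
    have := mul_nonneg hγ.le (sq_nonneg ‖p t‖)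
    have := mul_nonneg (mul_pos hα hρ).le (sq_nonneg ‖ξ t‖)
    linarith
  exact ⟨fun t ht => ⟨hderiv t ht, hrate t ht⟩,
    antitoneOn_Ici_of_hasDerivAt_nonpos hderiv hrate⟩

/-- Along solutions of the iKFAD dynamics, the energy
`𝒢(t) = f(x(t)) - f(x*) + ½‖p(t)‖² + (ρ/2)‖ξ(t)‖²` has derivative
`-γ‖p(t)‖² - αρ‖ξ(t)‖² ≤ 0`; in particular `𝒢` is nonincreasing on `[0, ∞)`. -/
theorem ikfad_lyapunov_decreasing
    (d : ℕ) (f : EuclideanSpace ℝ (Fin d) → ℝ)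
    (hf : ContDiff ℝ 1 f)
    (xstar : EuclideanSpace ℝ (Fin d)) (hmin : ∀ y, f xstar ≤ f y)
    (γ α ρ : ℝ) (hγ : 0 < γ) (hα : 0 < α) (hρ : 0 < ρ)
    (x p ξ : ℝ → EuclideanSpace ℝ (Fin d))
    (hξnonneg : ∀ t : ℝ, 0 ≤ t → ∀ i, 0 ≤ ξ t i)
    (hx : ∀ t, 0 ≤ t → HasDerivAt x (p t) t)
    (hp : ∀ t, 0 ≤ t → HasDerivAt p
      (-gradient f (x t) - γ • p t - cwMul (ξ t) (p t)) t)
    (hξ : ∀ t, 0 ≤ t → HasDerivAt ξ (ρ⁻¹ • cwSq (p t) - α • ξ t) t) :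
    (∀ t : ℝ, 0 ≤ t →
      HasDerivAt
        (fun s => f (x s) - f xstar + (1 / 2) * ‖p s‖ ^ 2 + (ρ / 2) * ‖ξ s‖ ^ 2)
        (-γ * ‖p t‖ ^ 2 - α * ρ * ‖ξ t‖ ^ 2) t ∧
      -γ * ‖p t‖ ^ 2 - α * ρ * ‖ξ t‖ ^ 2 ≤ 0) ∧
    AntitoneOn
      (fun s => f (x s) - f xstar + (1 / 2) * ‖p s‖ ^ 2 + (ρ / 2) * ‖ξ s‖ ^ 2)
      (Set.Ici (0 : ℝ)) :=
  ikfad_lyapunov_decreasing_general d f hf xstar γ α ρ hγ hα hρ x p ξ hx hp hξ
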